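/- arXiv:math/0702390 — 5 statements merged into one kernel-verified Lean document; each statement's English description precedes it below -/
import Mathlib

section
/- Let K be a ring, α an endomorphism of K, and B = K[x; α]. Define D : B → B ⊗_K B by D(x^i) = Σ_{ℓ=0}^{i-1} x^ℓ ⊗ x^{i-ℓ-1} extended K-linearly on left coefficients, where the tensor product B ⊗_K B uses the right K-action on the first factor twisted by α (b·λ := b·α(λ)). Then D is a K-derivation: D(PQ) = D(P)·Q + P·D(Q) for all P, Q ∈ B, and D(x) = 1 ⊗ 1. -/
/-- In `B = K[x; α]` (modelled abstractly, with the powers of `x` a left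
`K`-basis), let `M` be a `(B,B)`-bimodule together with an element `e` (playing the role of
`1 ⊗ 1` in `B_α ⊗_K B`) satisfying the twisted balance relation `ι(α λ)•e = e•ι(λ)`.
The map `D` determined by `D(ι(λ)·xⁱ) = ι(λ)•∑_{ℓ<i} xˡ • e • x^{i-ℓ-1}` satisfies
`D(x) = e` and the derivation rule `D(PQ) = D(P)·Q + P·D(Q)`. -/
theorem skew_derivative_is_derivation {K B M : Type*} [Ring K] [Ring B]
    [AddCommGroup M] [Module B M] [Module Bᵐᵒᵖ M] [SMulCommClass B Bᵐᵒᵖ M]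
    (α : K →+* K) (ι : K →+* B) (x : B)
    (hrel : ∀ a : K, x * ι a = ι (α a) * x)
    (hbasis : ∀ P : B, ∃! γ : ℕ →₀ K, P = γ.sum fun i a => ι a * x ^ i)
    (e : M) (htwist : ∀ a : K, ι (α a) • e = MulOpposite.op (ι a) • e)
    (D : B → M) (hDadd : ∀ P Q : B, D (P + Q) = D P + D Q)
    (hD : ∀ (a : K) (i : ℕ),
      D (ι a * x ^ i) = ι a • ∑ ℓ ∈ Finset.range i,
        x ^ ℓ • MulOpposite.op (x ^ (i - ℓ - 1)) • e) :
    D x = e ∧ ∀ P Q : B, D (P * Q) = P • D Q + MulOpposite.op Q • D P := by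
  classical
  set S : ℕ → M := fun n => ∑ ℓ ∈ Finset.range n,
      x ^ ℓ • MulOpposite.op (x ^ (n - ℓ - 1)) • e with hSdef
  -- moving powers of x past coefficients
  have hxpow : ∀ (n : ℕ) (a : K), x ^ n * ι a = ι ((α ^ n) a) * x ^ n := by
    intro n
    induction n with
    | zero => intro a; simp
    | succ n ih =>
      intro a
      calc x ^ (n+1) * ι a = x ^ n * (x * ι a) := by rw [pow_succ, mul_assoc]
        _ = x ^ n * ι (α a) * x := by rw [hrel, ← mul_assoc]
        _ = ι ((α ^ n) (α a)) * x ^ (n+1) := by rw [ih, mul_assoc, ← pow_succ]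
        _ = ι ((α ^ (n+1)) a) * x ^ (n+1) := by rw [pow_succ α n]; rfl
  -- D x = e
  have hDx : D x = e := by
    have := hD 1 1
    simpa using this
  refine ⟨hDx, ?_⟩
  -- splitting of S (i + j)
  have hsplit : ∀ i j : ℕ, S (i + j) = x ^ i • S j + MulOpposite.op (x ^ j) • S i := by
    intro i j
    have h : S (i + j) = MulOpposite.op (x ^ j) • S i + x ^ i • S j := by
      simp only [hSdef]
      rw [Finset.sum_range_add]
      congr 1
      · -- first block: ℓ < i
        rw [Finset.smul_sum]
        refine Finset.sum_congr rfl fun ℓ hℓ => ?_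
        rw [Finset.mem_range] at hℓ
        have h1 : i + j - ℓ - 1 = (i - ℓ - 1) + j := by omega
        rw [h1, pow_add, MulOpposite.op_mul, mul_smul, smul_comm]
      · -- second block: ℓ = i + m
        rw [Finset.smul_sum]
        refine Finset.sum_congr rfl fun m hm => ?_
        rw [Finset.mem_range] at hm
        have h1 : i + j - (i + m) - 1 = j - m - 1 := by omega
        rw [h1, pow_add, mul_smul]
    rw [h, add_comm]
  -- twist lemma
  have htw : ∀ (b : K) (n : ℕ), ι ((α ^ n) b) • S n = MulOpposite.op (ι b) • S n := by
    intro b n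
    simp only [hSdef, Finset.smul_sum]
    refine Finset.sum_congr rfl fun ℓ hℓ => ?_
    rw [Finset.mem_range] at hℓ
    set r := n - ℓ - 1 with hr
    have h1 : (α ^ n) b = (α ^ ℓ) (α ((α ^ r) b)) := by
      have hn : n = ℓ + (r + 1) := by omega
      rw [hn, pow_add, pow_succ']
      rfl
    calc ι ((α ^ n) b) • x ^ ℓ • MulOpposite.op (x ^ r) • e
        = (ι ((α ^ ℓ) (α ((α ^ r) b))) * x ^ ℓ) • MulOpposite.op (x ^ r) • e := by
          rw [h1, mul_smul]
      _ = (x ^ ℓ * ι (α ((α ^ r) b))) • MulOpposite.op (x ^ r) • e := by rw [hxpow]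
      _ = x ^ ℓ • MulOpposite.op (x ^ r) • ι (α ((α ^ r) b)) • e := by
          rw [mul_smul, smul_comm (ι (α ((α ^ r) b)))]
      _ = x ^ ℓ • MulOpposite.op (x ^ r) • MulOpposite.op (ι ((α ^ r) b)) • e := by
          rw [htwist]
      _ = x ^ ℓ • MulOpposite.op (ι ((α ^ r) b) * x ^ r) • e := by
          rw [MulOpposite.op_mul, mul_smul]
      _ = x ^ ℓ • MulOpposite.op (x ^ r * ι b) • e := by rw [← hxpow]
      _ = MulOpposite.op (ι b) • x ^ ℓ • MulOpposite.op (x ^ r) • e := by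
          rw [MulOpposite.op_mul, mul_smul, smul_comm (x ^ ℓ)]
  -- key identity on basis monomials
  have key : ∀ (a : K) (i : ℕ) (b : K) (j : ℕ),
      D ((ι a * x ^ i) * (ι b * x ^ j)) =
        (ι a * x ^ i) • D (ι b * x ^ j) +
          MulOpposite.op (ι b * x ^ j) • D (ι a * x ^ i) := by
    intro a i b j
    have hprod : (ι a * x ^ i) * (ι b * x ^ j) = ι (a * (α ^ i) b) * x ^ (i + j) := by
      rw [mul_assoc, ← mul_assoc (x ^ i), hxpow, map_mul, pow_add]
      simp [mul_assoc]
    rw [hprod, hD, hD, hD]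
    show ι (a * (α ^ i) b) • S (i + j) =
      (ι a * x ^ i) • ι b • S j + MulOpposite.op (ι b * x ^ j) • ι a • S i
    rw [hsplit, map_mul, mul_smul, smul_add, smul_add]
    congr 1
    · calc ι a • ι ((α ^ i) b) • x ^ i • S j
          = ι a • ((ι ((α ^ i) b) * x ^ i) • S j) := by rw [mul_smul]
        _ = ι a • ((x ^ i * ι b) • S j) := by rw [← hxpow]
        _ = (ι a * x ^ i) • ι b • S j := by rw [mul_smul, ← mul_smul, ← mul_smul]
    · calc ι a • ι ((α ^ i) b) • MulOpposite.op (x ^ j) • S i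
          = ι a • MulOpposite.op (x ^ j) • ι ((α ^ i) b) • S i := by
            rw [smul_comm (ι ((α ^ i) b))]
        _ = ι a • MulOpposite.op (x ^ j) • MulOpposite.op (ι b) • S i := by rw [htw]
        _ = ι a • MulOpposite.op (ι b * x ^ j) • S i := by
            rw [MulOpposite.op_mul, mul_smul]
        _ = MulOpposite.op (ι b * x ^ j) • ι a • S i := by rw [smul_comm]
  -- bilinear reduction
  intro P Q
  obtain ⟨γ, hγ, -⟩ := hbasis P
  obtain ⟨δ, hδ, -⟩ := hbasis Q
  set D' : B →+ M := AddMonoidHom.mk' D hDadd with hD'def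
  have hD'eq : ∀ b : B, D b = D' b := fun _ => rfl
  rw [hγ, hδ]
  simp only [Finsupp.sum, hD'eq]
  rw [Finset.sum_mul]
  simp only [Finset.mul_sum, map_sum]
  rw [Finset.sum_smul]
  simp only [Finset.smul_sum]
  simp only [Finset.op_sum, Finset.sum_smul]
  rw [← Finset.sum_add_distrib]
  refine Finset.sum_congr rfl fun i hi => ?_
  rw [← Finset.sum_add_distrib]
  refine Finset.sum_congr rfl fun j hj => ?_
  simpa only [hD'eq] using key (γ i) i (δ j) j
end

section
/- In the setting of the monogenic extension A = K[x; α]/⟨f⟩ (f monic of degree n ≥ 2 with α(λᵢ) = λᵢ and λᵢλ = α^i(λ)λᵢ), let Tf/Tx = Σ_{i=1}^n λ_{n-i} Σ_{ℓ=0}^{i-1} x^ℓ ⊗ x^{i-ℓ-1} in A ⊗_K A (first factor right-twisted by α). Then for all 0 ≤ i ≤ n−1 one has x^i · (Tf/Tx) = (Tf/Tx) · x^i in A ⊗_K A. -/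
/-- In the monogenic extension `A = K[x;α]/⟨f⟩` (modelled abstractly: `f = 0`
holds in `A`), let `M` be an `(A,A)`-bimodule with an element `e` (playing the role of
`1 ⊗ 1` in `A_α ⊗_K A`) satisfying the twisted balance relation. Then the element
`Tf/Tx = ∑_{i=1}^n λ_{n-i} ∑_{ℓ<i} xˡ • e • x^{i-ℓ-1}` commutes with `xⁱ` for `0 ≤ i ≤ n-1`:
`xⁱ • (Tf/Tx) = (Tf/Tx) • xⁱ`. -/
theorem derivative_of_f_commutes_with_powers {K A M : Type*} [Ring K] [Ring A]
    [AddCommGroup M] [Module A M] [Module Aᵐᵒᵖ M] [SMulCommClass A Aᵐᵒᵖ M]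
    (α : K →+* K) (ι : K →+* A) (x : A)
    (n : ℕ) (hn : 2 ≤ n) (c : ℕ → K) (hc0 : c 0 = 1)
    (hrel : ∀ a : K, x * ι a = ι (α a) * x)
    (hfix : ∀ i, 1 ≤ i → i ≤ n → α (c i) = c i)
    (hcomm : ∀ i, 1 ≤ i → i ≤ n → ∀ a : K, c i * a = (⇑α)^[i] a * c i)
    (hfzero : x ^ n + ∑ i ∈ Finset.range n, ι (c (i + 1)) * x ^ (n - (i + 1)) = 0)
    (e : M) (htwist : ∀ a : K, ι (α a) • e = MulOpposite.op (ι a) • e)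
    (T : M) (hT : T = ∑ i ∈ Finset.Icc 1 n, ∑ ℓ ∈ Finset.range i,
      (ι (c (n - i)) * x ^ ℓ) • MulOpposite.op (x ^ (i - ℓ - 1)) • e) :
    ∀ i < n, x ^ i • T = MulOpposite.op (x ^ i) • T := by
  have hfix' : ∀ j, j ≤ n → α (c j) = c j := by
    rintro (_ | j) hj
    · rw [hc0, map_one]
    · exact hfix _ (Nat.succ_le_succ (Nat.zero_le _)) hj
  -- the sum S = ∑_{i=1}^n c_{n-i} x^i equals -ι (c n)
  set S : A := ∑ i ∈ Finset.Icc 1 n, ι (c (n - i)) * x ^ i with hS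
  have hSsum : ∑ i ∈ Finset.range (n + 1), ι (c (n - i)) * x ^ i = 0 := by
    have h1 : ∑ j ∈ Finset.range n, ι (c (j + 1)) * x ^ (n - (j + 1))
        = ∑ i ∈ Finset.range n, ι (c (n - i)) * x ^ i := by
      rw [← Finset.sum_range_reflect (fun i => ι (c (n - i)) * x ^ i) n]
      refine Finset.sum_congr rfl fun j hj => ?_
      have hj' : j < n := Finset.mem_range.mp hj
      have e1 : n - (n - 1 - j) = j + 1 := by omega
      have e2 : n - 1 - j = n - (j + 1) := by omega
      rw [e1, e2]
    rw [Finset.sum_range_succ, Nat.sub_self, hc0, map_one, one_mul, ← h1, add_comm]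
    exact hfzero
  have hSval : S = -ι (c n) := by
    have h2 : ∑ i ∈ Finset.range (n + 1), ι (c (n - i)) * x ^ i
        = (∑ i ∈ Finset.range n, ι (c (n - (i + 1))) * x ^ (i + 1)) + ι (c n) := by
      rw [Finset.sum_range_succ' (fun i => ι (c (n - i)) * x ^ i) n]
      simp
    have h3 : S = ∑ i ∈ Finset.range n, ι (c (n - (i + 1))) * x ^ (i + 1) := by
      rw [hS, ← Finset.Ico_add_one_right_eq_Icc, Finset.sum_Ico_eq_sum_range]
      refine Finset.sum_congr (by simp) fun j hj => ?_
      rw [add_comm 1 j]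
    rw [h3, eq_neg_iff_add_eq_zero, ← h2, hSsum]
  have htw : ∀ j, j ≤ n → ι (c j) • e = MulOpposite.op (ι (c j)) • e := fun j hj => by
    rw [← hfix' j hj, htwist, hfix' j hj]
  haveI : SMulCommClass Aᵐᵒᵖ A M := SMulCommClass.symm _ _ _
  -- key step : x • T = op x • T
  have hkey : x • T = MulOpposite.op x • T := by
    rw [← sub_eq_zero]
    have hsub : x • T - MulOpposite.op x • T = S • e - MulOpposite.op S • e := by
      rw [hT, Finset.smul_sum, Finset.smul_sum, ← Finset.sum_sub_distrib]
      have hinner : ∀ i ∈ Finset.Icc 1 n,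
          ((x • ∑ ℓ ∈ Finset.range i,
              (ι (c (n - i)) * x ^ ℓ) • MulOpposite.op (x ^ (i - ℓ - 1)) • e)
          - MulOpposite.op x • ∑ ℓ ∈ Finset.range i,
              (ι (c (n - i)) * x ^ ℓ) • MulOpposite.op (x ^ (i - ℓ - 1)) • e)
          = (ι (c (n - i)) * x ^ i) • e
            - MulOpposite.op (ι (c (n - i)) * x ^ i) • e := by
        intro i hi
        obtain ⟨hi1, hin⟩ := Finset.mem_Icc.mp hi
        rw [Finset.smul_sum, Finset.smul_sum, ← Finset.sum_sub_distrib]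
        set g : ℕ → M := fun ℓ => (ι (c (n - i)) * x ^ ℓ) • MulOpposite.op (x ^ (i - ℓ)) • e
          with hg
        have hterms : ∀ ℓ ∈ Finset.range i,
            (x • ((ι (c (n - i)) * x ^ ℓ) • MulOpposite.op (x ^ (i - ℓ - 1)) • e)
            - MulOpposite.op x • ((ι (c (n - i)) * x ^ ℓ) • MulOpposite.op (x ^ (i - ℓ - 1)) • e))
            = g (ℓ + 1) - g ℓ := by
          intro ℓ hℓ
          have hℓ' : ℓ < i := Finset.mem_range.mp hℓ
          have hleft : x • ((ι (c (n - i)) * x ^ ℓ) • MulOpposite.op (x ^ (i - ℓ - 1)) • e)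
              = g (ℓ + 1) := by
            rw [smul_smul, hg]
            have : x * (ι (c (n - i)) * x ^ ℓ) = ι (c (n - i)) * x ^ (ℓ + 1) := by
              rw [← mul_assoc, hrel, hfix' (n - i) (Nat.sub_le n i), mul_assoc, ← pow_succ']
            rw [this, show i - ℓ - 1 = i - (ℓ + 1) from by omega]
          have hright : MulOpposite.op x •
              ((ι (c (n - i)) * x ^ ℓ) • MulOpposite.op (x ^ (i - ℓ - 1)) • e) = g ℓ := by
            rw [smul_comm, smul_smul, hg]
            have : MulOpposite.op x * MulOpposite.op (x ^ (i - ℓ - 1))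
                = MulOpposite.op (x ^ (i - ℓ)) := by
              rw [← MulOpposite.op_mul, ← pow_succ, show i - ℓ - 1 + 1 = i - ℓ from by omega]
            rw [this]
          rw [hleft, hright]
        rw [Finset.sum_congr rfl hterms, Finset.sum_range_sub g i, hg]
        simp only [Nat.sub_self, Nat.sub_zero, pow_zero, mul_one, MulOpposite.op_one, one_smul]
        congr 1
        -- remaining: (ι c * 1) • op (x^i) • e = op (ι c * x^i) • e
        rw [smul_comm, htw (n - i) (Nat.sub_le n i), smul_smul, ← MulOpposite.op_mul]
      rw [Finset.sum_congr rfl hinner, Finset.sum_sub_distrib, hS, Finset.sum_smul,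
        Finset.op_sum, Finset.sum_smul]
    rw [hsub, hSval]
    rw [neg_smul, MulOpposite.op_neg, neg_smul, sub_neg_eq_add, neg_add_eq_zero]
    exact htw n le_rfl
  intro i _
  induction i with
  | zero => simp
  | succ i ih =>
    have hi : i < n := by omega
    rw [pow_succ', mul_smul, ih hi, smul_comm, hkey, smul_smul, ← MulOpposite.op_mul,
      ← pow_succ']
end

section
/- Let K, α, f, A be as in the monogenic extension setting, and suppose there exists λ̌ in the center of K with α^n(λ̌) = λ̌ and such that λ̌ − α^i(λ̌) is not a zero divisor in K for 1 ≤ i < n. Then for each r ≥ 0, an element a = Σ_{i=0}^{n-1} λ'ᵢ x^i ∈ A satisfies a·λ = α^{rn}(λ)·a for all λ ∈ K if and only if λ'ᵢ = 0 for all i ≥ 1 and λ'₀·λ = α^{rn}(λ)·λ'₀ for all λ ∈ K. -/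
/-- In the monogenic extension `A = K[x;α]/⟨f⟩` (modelled abstractly: `f = 0`
holds in `A` and `1, x, …, x^{n-1}` is a left `K`-basis), under the non-zero-divisor
hypothesis on a central `λ̌`, an element `a = ∑ λ'ᵢ xⁱ` satisfies `a·λ = α^{rn}(λ)·a` for
all `λ ∈ K` iff `λ'ᵢ = 0` for `i ≥ 1` and `λ'₀·λ = α^{rn}(λ)·λ'₀` for all `λ`. -/
theorem twisted_invariants_even {K A : Type*} [Ring K] [Ring A]
    (α : K →+* K) (ι : K →+* A) (x : A)
    (n : ℕ) (hn : 2 ≤ n) (c : ℕ → K) (hc0 : c 0 = 1)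
    (hrel : ∀ a : K, x * ι a = ι (α a) * x)
    (hfix : ∀ i, 1 ≤ i → i ≤ n → α (c i) = c i)
    (hcomm : ∀ i, 1 ≤ i → i ≤ n → ∀ a : K, c i * a = (⇑α)^[i] a * c i)
    (hfzero : x ^ n + ∑ i ∈ Finset.range n, ι (c (i + 1)) * x ^ (n - (i + 1)) = 0)
    (hbasis : ∀ a : A, ∃! γ : Fin n → K, a = ∑ i : Fin n, ι (γ i) * x ^ (i : ℕ))
    (l : K) (hl : l ∈ Subring.center K) (hlfix : (⇑α)^[n] l = l)
    (hnzd : ∀ i, 1 ≤ i → i < n → ∀ μ : K,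
      (μ * (l - (⇑α)^[i] l) = 0 → μ = 0) ∧ ((l - (⇑α)^[i] l) * μ = 0 → μ = 0)) :
    ∀ (r : ℕ) (γ : Fin n → K),
      ((∀ μ : K, (∑ i : Fin n, ι (γ i) * x ^ (i : ℕ)) * ι μ
          = ι ((⇑α)^[r * n] μ) * ∑ i : Fin n, ι (γ i) * x ^ (i : ℕ))
        ↔ ((∀ i : Fin n, 1 ≤ (i : ℕ) → γ i = 0) ∧
            ∀ μ : K, γ ⟨0, by omega⟩ * μ = (⇑α)^[r * n] μ * γ ⟨0, by omega⟩)) := by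
  intro r γ
  have hx : ∀ (i : ℕ) (μ : K), x ^ i * ι μ = ι ((⇑α)^[i] μ) * x ^ i := by
    intro i
    induction i with
    | zero => intro μ; simp
    | succ k ih =>
      intro μ
      rw [pow_succ, mul_assoc, hrel, ← mul_assoc, ih, mul_assoc, ← pow_succ,
        ← Function.iterate_succ_apply]
  have key : ∀ μ : K,
      (∑ i : Fin n, ι (γ i) * x ^ (i : ℕ)) * ι μ
        = ∑ i : Fin n, ι (γ i * (⇑α)^[(i : ℕ)] μ) * x ^ (i : ℕ) := by
    intro μ
    rw [Finset.sum_mul]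
    refine Finset.sum_congr rfl fun i _ => ?_
    rw [mul_assoc, hx, ← mul_assoc, ← map_mul]
  have key2 : ∀ ν : K,
      ι ν * ∑ i : Fin n, ι (γ i) * x ^ (i : ℕ)
        = ∑ i : Fin n, ι (ν * γ i) * x ^ (i : ℕ) := by
    intro ν
    rw [Finset.mul_sum]
    refine Finset.sum_congr rfl fun i _ => ?_
    rw [← mul_assoc, ← map_mul]
  have hcoeff : ∀ μ : K,
      ((∑ i : Fin n, ι (γ i) * x ^ (i : ℕ)) * ι μ
          = ι ((⇑α)^[r * n] μ) * ∑ i : Fin n, ι (γ i) * x ^ (i : ℕ))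
      ↔ ∀ i : Fin n, γ i * (⇑α)^[(i : ℕ)] μ = (⇑α)^[r * n] μ * γ i := by
    intro μ
    rw [key, key2]
    constructor
    · intro h i
      obtain ⟨δ, -, huniq⟩ :=
        hbasis (∑ i : Fin n, ι (γ i * (⇑α)^[(i : ℕ)] μ) * x ^ (i : ℕ))
      have h1 := huniq (fun i => γ i * (⇑α)^[(i : ℕ)] μ) rfl
      have h2 := huniq (fun i => (⇑α)^[r * n] μ * γ i) h
      exact congrFun (h1.trans h2.symm) i
    · intro h
      exact Finset.sum_congr rfl fun i _ => by rw [h i]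
  constructor
  · intro h
    have hzero : ∀ i : Fin n, 1 ≤ (i : ℕ) → γ i = 0 := by
      intro i hi
      have h1 := (hcoeff l).mp (h l) i
      have hlr : (⇑α)^[r * n] l = l := by
        rw [mul_comm, Function.iterate_mul]
        exact Function.iterate_fixed hlfix r
      rw [hlr] at h1
      have hc : l * γ i = γ i * l := (Subring.mem_center_iff.mp hl (γ i)).symm
      have hz : γ i * (l - (⇑α)^[(i : ℕ)] l) = 0 := by
        rw [mul_sub, h1, hc, sub_self]
      exact (hnzd i hi i.isLt (γ i)).1 hz
    refine ⟨hzero, fun μ => ?_⟩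
    have h0 := (hcoeff μ).mp (h μ) ⟨0, by omega⟩
    simpa using h0
  · rintro ⟨hz, h0⟩ μ
    refine (hcoeff μ).mpr fun i => ?_
    rcases Nat.eq_zero_or_pos (i : ℕ) with hi | hi
    · have : i = ⟨0, by omega⟩ := Fin.ext hi
      rw [this]
      simpa using h0 μ
    · rw [hz i hi]; simp
end

section
/- Let K, α, f, A be as in the monogenic extension setting with the non-zero-divisor hypothesis (∃ central λ̌ with α^n(λ̌) = λ̌ and λ̌ − α^i(λ̌) non-zero-divisor for 1 ≤ i < n). For λ ∈ K^{α^{mn}}, the element Σ_{i=1}^{n} Σ_{ℓ=0}^{i-1} λ_{n-i} x^ℓ (λx) x^{i-ℓ-1}, computed in A, equals −Σ_{ℓ=0}^{n-1} α^ℓ(λ)·λₙ. In particular, if λₙ = 0 this element is zero. -/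
/-- In the monogenic extension `A = K[x;α]/⟨f⟩` with the non-zero-divisor
hypothesis, for `λ ∈ K^{α^{mn}}` the element
`∑_{i=1}^n ∑_{ℓ=0}^{i-1} λ_{n-i} xˡ (λx) x^{i-ℓ-1}` of `A` equals
`−∑_{ℓ=0}^{n-1} αˡ(λ)·λₙ`; in particular it is zero when `λₙ = 0`. -/
theorem even_coboundary_formula {K A : Type*} [Ring K] [Ring A]
    (α : K →+* K) (ι : K →+* A) (x : A)
    (n : ℕ) (hn : 2 ≤ n) (c : ℕ → K) (hc0 : c 0 = 1)
    (hrel : ∀ a : K, x * ι a = ι (α a) * x)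
    (hfix : ∀ i, 1 ≤ i → i ≤ n → α (c i) = c i)
    (hcomm : ∀ i, 1 ≤ i → i ≤ n → ∀ a : K, c i * a = (⇑α)^[i] a * c i)
    (hfzero : x ^ n + ∑ i ∈ Finset.range n, ι (c (i + 1)) * x ^ (n - (i + 1)) = 0)
    (hbasis : ∀ a : A, ∃! γ : Fin n → K, a = ∑ i : Fin n, ι (γ i) * x ^ (i : ℕ))
    (l : K) (hl : l ∈ Subring.center K) (hlfix : (⇑α)^[n] l = l)
    (hnzd : ∀ i, 1 ≤ i → i < n → ∀ μ : K,
      (μ * (l - (⇑α)^[i] l) = 0 → μ = 0) ∧ ((l - (⇑α)^[i] l) * μ = 0 → μ = 0))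
    (m : ℕ) (lam : K) (hlam : ∀ μ : K, lam * μ = (⇑α)^[m * n] μ * lam) :
    (∑ i ∈ Finset.Icc 1 n, ∑ ℓ ∈ Finset.range i,
        ι (c (n - i)) * x ^ ℓ * (ι lam * x) * x ^ (i - ℓ - 1))
      = ι (-(∑ ℓ ∈ Finset.range n, (⇑α)^[ℓ] lam * c n)) ∧
    (c n = 0 → (∑ i ∈ Finset.Icc 1 n, ∑ ℓ ∈ Finset.range i,
        ι (c (n - i)) * x ^ ℓ * (ι lam * x) * x ^ (i - ℓ - 1)) = 0) := by
  -- commutation of powers of x with scalars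
  have hpow : ∀ (ℓ : ℕ) (a : K), x ^ ℓ * ι a = ι ((⇑α)^[ℓ] a) * x ^ ℓ := by
    intro ℓ
    induction ℓ with
    | zero => intro a; simp
    | succ ℓ ih =>
      intro a
      rw [pow_succ, mul_assoc, hrel, ← mul_assoc, ih, Function.iterate_succ_apply,
        mul_assoc]
  -- the intermediate coefficients vanish
  have hczero : ∀ k, 1 ≤ k → k < n → c k = 0 := by
    intro k hk1 hk2
    have h1 : c k * l = (⇑α)^[k] l * c k := hcomm k hk1 hk2.le l
    have h2 : c k * l = l * c k := Subring.mem_center_iff.mp hl (c k)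
    have h3 : (l - (⇑α)^[k] l) * c k = 0 := by
      rw [sub_mul, ← h2, ← h1, sub_self]
    exact (hnzd k hk1 hk2 (c k)).2 h3
  -- x^n = -ι (c n)
  have hxn : x ^ n = -ι (c n) := by
    have h := hfzero
    rw [Finset.sum_eq_single (n - 1)] at h
    · have hn1 : n - 1 + 1 = n := by omega
      rw [hn1, Nat.sub_self, pow_zero, mul_one] at h
      exact eq_neg_of_add_eq_zero_left h
    · intro i hi hne
      have hi' := Finset.mem_range.mp hi
      have : c (i + 1) = 0 := hczero (i + 1) (by omega) (by omega)
      simp [this]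
    · intro h
      exact absurd (Finset.mem_range.mpr (by omega)) h
  have hmain : (∑ i ∈ Finset.Icc 1 n, ∑ ℓ ∈ Finset.range i,
        ι (c (n - i)) * x ^ ℓ * (ι lam * x) * x ^ (i - ℓ - 1))
      = ι (-(∑ ℓ ∈ Finset.range n, (⇑α)^[ℓ] lam * c n)) := by
    rw [Finset.sum_eq_single n]
    · have hterm : ∀ ℓ ∈ Finset.range n,
          ι (c (n - n)) * x ^ ℓ * (ι lam * x) * x ^ (n - ℓ - 1)
            = -(ι ((⇑α)^[ℓ] lam * c n)) := by
        intro ℓ hℓ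
        have hℓn := Finset.mem_range.mp hℓ
        have hx : x ^ ℓ * (ι lam * x) * x ^ (n - ℓ - 1)
            = ι ((⇑α)^[ℓ] lam) * x ^ n := by
          calc x ^ ℓ * (ι lam * x) * x ^ (n - ℓ - 1)
              = (x ^ ℓ * ι lam) * (x * x ^ (n - ℓ - 1)) := by
                simp only [mul_assoc]
            _ = ι ((⇑α)^[ℓ] lam) * (x ^ ℓ * (x * x ^ (n - ℓ - 1))) := by
                rw [hpow, mul_assoc]
            _ = ι ((⇑α)^[ℓ] lam) * x ^ n := by
                rw [← pow_succ', ← pow_add]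
                congr 2
                omega
        rw [Nat.sub_self, hc0, map_one, one_mul, hx, hxn, map_mul]
        rw [mul_neg]
      rw [Finset.sum_congr rfl hterm, Finset.sum_neg_distrib, ← map_sum, ← map_neg]
    · intro b hb hbn
      have hb' := Finset.mem_Icc.mp hb
      have : c (n - b) = 0 := hczero (n - b) (by omega) (by omega)
      simp [this]
    · intro h
      exact absurd (Finset.mem_Icc.mpr ⟨by omega, le_refl n⟩) h
  refine ⟨hmain, fun hcn => ?_⟩
  rw [hmain, hcn]
  simp
end

section
/- Let k be a field, G a finite group, χ : G → k^× a character of order dividing n admitting g₁ ∈ Z(G) with χ(g₁) a primitive n-th root of unity, and suppose χ^n(g) ≠ 1 for some g ∈ G. Then in B = k[G][x; α] (α(h) = χ(h)h), the two-sided ideal generated by x^n − ξ(g₁^n − 1) (for ξ ∈ k^×) contains both x^n and g₁^n − 1; in fact ⟨x^n − ξ(g₁^n − 1)⟩ = ⟨x^n, g₁^n − 1⟩, using g^{-1}(x^n − ξ(g₁^n−1))g = χ^n(g)x^n − ξ(g₁^n − 1). -/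
/-- The algebra automorphism `α` of the group algebra `k[G]` determined by a character
`χ : G → kˣ` via `α(g) = χ(g)·g`. -/
noncomputable def chiAut {k G : Type*} [Field k] [Group G] (χ : G →* kˣ) :
    MonoidAlgebra k G →ₐ[k] MonoidAlgebra k G :=
  MonoidAlgebra.lift k (MonoidAlgebra k G) G
    { toFun := fun g => MonoidAlgebra.single g ((χ g : k))
      map_one' := by simp [MonoidAlgebra.one_def]
      map_mul' := fun g h => by simp [MonoidAlgebra.single_mul_single] }

lemma chiAut_single {k G : Type*} [Field k] [Group G] (χ : G →* kˣ) (g : G) (c : k) :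
    chiAut χ (MonoidAlgebra.single g c) = MonoidAlgebra.single g (c * (χ g : k)) := by
  rw [chiAut, MonoidAlgebra.lift_single]
  simp [MonoidAlgebra.smul_single']

lemma spanle_of_subset {R : Type*} [Ring R] {s : Set R} {I : TwoSidedIdeal R}
    (h : s ⊆ I) : TwoSidedIdeal.span s ≤ I :=
  fun _ hx => TwoSidedIdeal.mem_span_iff.mp hx I h

/-- In `B = k[G][x; α]` (modelled abstractly), if `g₁ ∈ Z(G)` with `χ(g₁)` a
primitive `n`-th root of unity and `χⁿ(g) ≠ 1` for some `g ∈ G`, then for `ξ ∈ kˣ` the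
two-sided ideal generated by `xⁿ − ξ(g₁ⁿ − 1)` equals the two-sided ideal generated by
`xⁿ` and `g₁ⁿ − 1`. -/
theorem ideal_of_f_eq_ideal_of_xn_and_g1n {k G B : Type*} [Field k] [Group G] [Fintype G]
    [Ring B] (χ : G →* kˣ) (n : ℕ) (hn : 2 ≤ n)
    (g₁ : G) (hg₁ : g₁ ∈ Subgroup.center G)
    (hprim1 : ((χ g₁ : k)) ^ n = 1)
    (hprim2 : ∀ i, 1 ≤ i → i < n → ((χ g₁ : k)) ^ i ≠ 1)
    (hnontriv : ∃ g : G, ((χ g : k)) ^ n ≠ 1)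
    (ι : MonoidAlgebra k G →+* B) (x : B)
    (hrel : ∀ a : MonoidAlgebra k G, x * ι a = ι (chiAut χ a) * x)
    (ξ : kˣ) (f : B)
    (hf : f = x ^ n - ι ((ξ : k) • (MonoidAlgebra.of k G (g₁ ^ n) - 1))) :
    TwoSidedIdeal.span {f}
      = TwoSidedIdeal.span {x ^ n, ι (MonoidAlgebra.of k G (g₁ ^ n) - 1)} := by
  obtain ⟨g, hc⟩ := hnontriv
  set c : k := ((χ g : k)) ^ n with hc_def
  -- scalar embedding
  set e : k → B := fun a => ι (MonoidAlgebra.single 1 a) with he_def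
  have he_mul : ∀ a b : k, e a * e b = e (a * b) := by
    intro a b
    simp only [he_def, ← map_mul, MonoidAlgebra.single_mul_single, one_mul]
  have he_one : e 1 = 1 := by
    simp only [he_def, ← MonoidAlgebra.one_def, map_one]
  have hsmul : ∀ (r : k) (a : MonoidAlgebra k G), r • a = MonoidAlgebra.single 1 r * a := by
    intro r a
    rw [Algebra.smul_def, MonoidAlgebra.coe_algebraMap]
    rfl
  -- m in the group algebra
  set m : MonoidAlgebra k G := MonoidAlgebra.of k G (g₁ ^ n) - 1 with hm_def
  have hm_single : m = MonoidAlgebra.single (g₁ ^ n) 1 - MonoidAlgebra.single 1 1 := by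
    simp [hm_def, MonoidAlgebra.of_apply, MonoidAlgebra.one_def]
  -- centrality of g₁ ^ n
  have hcen : g₁ ^ n ∈ Subgroup.center G := Subgroup.pow_mem _ hg₁ n
  have hcomm : g₁ ^ n * g = g * g₁ ^ n := (Subgroup.mem_center_iff.mp hcen g).symm
  -- key commutation: x^N * ι(single h a) = ι(single h ((χ h)^N * a)) * x^N
  have key : ∀ (N : ℕ) (h : G) (a : k),
      x ^ N * ι (MonoidAlgebra.single h a)
        = ι (MonoidAlgebra.single h (((χ h : k)) ^ N * a)) * x ^ N := by
    intro N
    induction N with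
    | zero => intro h a; simp
    | succ N ih =>
        intro h a
        rw [pow_succ', mul_assoc, ih h a, ← mul_assoc, hrel, chiAut_single, mul_assoc,
          ← pow_succ']
        congr 2
        ring
  set Q : MonoidAlgebra k G := MonoidAlgebra.single g 1 with hQ_def
  set P : MonoidAlgebra k G := MonoidAlgebra.single g⁻¹ 1 with hP_def
  have hPQ : P * Q = 1 := by
    simp [hP_def, hQ_def, MonoidAlgebra.single_mul_single, MonoidAlgebra.one_def]
  -- m commutes with Q
  have hmQ : m * Q = Q * m := by
    rw [hm_single]
    simp only [sub_mul, mul_sub, hQ_def, MonoidAlgebra.single_mul_single, one_mul, mul_one,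
      hcomm]
  -- conjugation of the scalar part
  have hPmQ : P * m * Q = m := by
    rw [mul_assoc, hmQ, ← mul_assoc, hPQ, one_mul]
  have hconj_scalar : P * ((ξ : k) • m) * Q = (ξ : k) • m := by
    rw [mul_smul_comm, smul_mul_assoc, hPmQ]
  -- conjugation of x^n
  have hconj_x : ι P * (x ^ n * ι Q) = e c * x ^ n := by
    rw [key n g 1, mul_one, ← mul_assoc, ← map_mul, hP_def,
      MonoidAlgebra.single_mul_single, inv_mul_cancel, one_mul]
  -- the conjugated element
  set f' : B := ι P * f * ι Q with hf'_def
  have hf' : f' = e c * x ^ n - ι ((ξ : k) • m) := by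
    rw [hf'_def, hf, mul_sub, sub_mul, mul_assoc (ι P) (x ^ n) (ι Q), hconj_x,
      ← map_mul, ← map_mul, hconj_scalar]
  -- f' - f = (e c - 1) * x^n
  have hdiff : f' - f = ι (MonoidAlgebra.single 1 (c - 1)) * x ^ n := by
    rw [hf', hf]
    have : MonoidAlgebra.single (1 : G) (c - 1)
        = MonoidAlgebra.single 1 c - MonoidAlgebra.single 1 1 := by
      simp [Finsupp.single_sub]
    rw [this, map_sub, sub_mul, ← MonoidAlgebra.one_def, map_one, one_mul]
    abel
  -- invert c - 1
  have hc1 : c - 1 ≠ 0 := sub_ne_zero.mpr hc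
  have hinv : e (c - 1)⁻¹ * ι (MonoidAlgebra.single 1 (c - 1)) = 1 := by
    have := he_mul (c - 1)⁻¹ (c - 1)
    rw [inv_mul_cancel₀ hc1, he_one] at this
    exact this
  -- memberships
  set I := TwoSidedIdeal.span {f} with hI_def
  have hfI : f ∈ I := TwoSidedIdeal.subset_span rfl
  have hf'I : f' ∈ I := by
    exact TwoSidedIdeal.mul_mem_right _ _ _ (TwoSidedIdeal.mul_mem_left _ _ _ hfI)
  have hxnI : x ^ n ∈ I := by
    have h1 : f' - f ∈ I := TwoSidedIdeal.sub_mem I hf'I hfI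
    have h2 : e (c - 1)⁻¹ * (f' - f) ∈ I := TwoSidedIdeal.mul_mem_left _ _ _ h1
    rwa [hdiff, ← mul_assoc, hinv, one_mul] at h2
  have hsmI : ι ((ξ : k) • m) ∈ I := by
    have : x ^ n - f ∈ I := TwoSidedIdeal.sub_mem I hxnI hfI
    rwa [hf, sub_sub_cancel] at this
  have hmI : ι m ∈ I := by
    have h2 : e (ξ⁻¹ : kˣ) * ι ((ξ : k) • m) ∈ I := TwoSidedIdeal.mul_mem_left _ _ _ hsmI
    have h3 : e (ξ⁻¹ : kˣ) * ι ((ξ : k) • m) = ι m := by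
      rw [he_def, ← map_mul, ← hsmul, smul_smul]
      norm_num
    rwa [h3] at h2
  -- the other direction: f ∈ span {xⁿ, ι m}
  refine le_antisymm ?_ ?_
  · apply spanle_of_subset
    intro y hy
    rcases hy with rfl | rfl
    · rw [hf]
      refine TwoSidedIdeal.sub_mem _ ?_ ?_
      · exact TwoSidedIdeal.subset_span (by left; rfl)
      · have hmJ : ι m ∈ TwoSidedIdeal.span {x ^ n, ι (MonoidAlgebra.of k G (g₁ ^ n) - 1)} :=
          TwoSidedIdeal.subset_span (by right; rfl)
        have : e (ξ : k) * ι m ∈ TwoSidedIdeal.span {x ^ n, ι (MonoidAlgebra.of k G (g₁ ^ n) - 1)} :=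
          TwoSidedIdeal.mul_mem_left _ _ _ hmJ
        rwa [he_def, ← map_mul, ← hsmul] at this
  · apply spanle_of_subset
    intro y hy
    rcases hy with rfl | rfl
    · exact hxnI
    · exact hmI
end
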